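/- arXiv:2406.17689 — 3 statements merged into one kernel-verified Lean document; each statement's English description precedes it below -/
import Mathlib

section
/- Fix p ∈ (0, 1/2), θ > 0, and an integer t ≥ 0. Then for all sufficiently large d (depending on p, θ, t) and all N with log₂(N)/d ≥ 1 − H₂(p) + θ, the following holds: for every map G : {0, ..., N−1} → 𝔽₂^d and every map Dec : 𝔽₂^d → {0, ..., N−1}, there exists j ∈ {0, ..., N−1} such that Pr_{η ∼ Ber(p)^d}[ |j − Dec(G(j) ⊕ η)| > t ] ≥ 0.99. -/
/-!
Fix ε > 0 with ε·log₂((1-p)/p) = θ/2. By Chebyshev's inequality, the noise η has at most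
(p - ε)d ones only with probability at most 1/(4ε²d); any other single noise vector has
probability at most 2^((ε·log₂((1-p)/p) - H₂(p))d) = 2^((θ/2 - H₂(p))d). Message j is decoded
within t exactly when G j + η falls into Dec⁻¹[j - t, j + t], and these preimages cover 𝔽₂^d at
most 2t+1 times, so the noise sets on which the messages succeed, being translates of these
preimages, have total size at most (2t+1)2^d. Summing over the N ≥ 2^((1 - H₂(p) + θ)d)
messages, the success probabilities add up to at most N/(4ε²d) + (2t+1)2^((1 - H₂(p) + θ/2)d),
which is at most N/100 for large d, so some message succeeds with probability at most 1/100.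
-/

open MeasureTheory

noncomputable instance : MeasurableSpace (ZMod 2) := ⊤

/-- The Bernoulli(p) measure on 𝔽₂: mass p on 1 and 1-p on 0. -/
noncomputable def bern (p : ℝ) : Measure (ZMod 2) :=
  ENNReal.ofReal (1 - p) • Measure.dirac 0 + ENNReal.ofReal p • Measure.dirac 1

/-- The product (i.i.d.) Bernoulli(p) measure on 𝔽₂^ι, i.e. the law of η ∼ Ber(p)^ι. -/
noncomputable def bernPi (p : ℝ) (ι : Type) [Fintype ι] : Measure (ι → ZMod 2) :=
  Measure.pi fun _ => bern p

/-- The binary entropy function H₂(p) = -p log₂ p - (1-p) log₂ (1-p). -/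
noncomputable def H2 (p : ℝ) : ℝ := -p * Real.logb 2 p - (1 - p) * Real.logb 2 (1 - p)

open MeasureTheory ProbabilityTheory Finset Real Filter

instance : DiscreteMeasurableSpace (ZMod 2) := ⟨fun _ => trivial⟩

lemma measureReal_le_add_mul_card {α : Type*} [MeasurableSpace α] [MeasurableSingletonClass α]
    (μ : Measure α) [IsFiniteMeasure μ] (L : Set α) {q : ℝ} (hq0 : 0 ≤ q)
    (hq : ∀ x ∉ L, μ.real {x} ≤ q) (s : Finset α) : μ.real s ≤ μ.real L + q * #s := by
  classical
  calc μ.real s ≤ μ.real (L ∪ ↑(s.filter (· ∉ L))) := measureReal_mono fun x hx => by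
        by_cases h : x ∈ L
        · exact .inl h
        · exact .inr (by simpa [h] using hx)
    _ ≤ μ.real L + ∑ x ∈ s.filter (· ∉ L), μ.real {x} := by
        rw [sum_measureReal_singleton]; exact measureReal_union_le _ _
    _ ≤ μ.real L + q * #s := by
        gcongr
        calc ∑ x ∈ s.filter (· ∉ L), μ.real {x} ≤ #(s.filter (· ∉ L)) • q :=
              sum_le_card_nsmul _ _ _ fun x hx => hq x (mem_filter.1 hx).2
          _ ≤ q * #s := by
              rw [nsmul_eq_mul, mul_comm]; gcongr; exact filter_subset _ _

lemma exists_ofReal_le_measure_compl {α : Type*} [MeasurableSpace α] (μ : Measure α)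
    [IsProbabilityMeasure μ] {N : ℕ} (hN : 0 < N) (s : ℕ → Set α) (hs : ∀ j, MeasurableSet (s j))
    {δ : ℝ} (h : ∑ j ∈ range N, μ.real (s j) ≤ N * δ) :
    ∃ j < N, ENNReal.ofReal (1 - δ) ≤ μ (s j)ᶜ := by
  obtain ⟨j, hj, hδ⟩ := exists_le_of_sum_le (nonempty_range_iff.2 hN.ne')
    (h.trans_eq (by simp : (N : ℝ) * δ = ∑ _j ∈ range N, δ))
  refine ⟨j, mem_range.1 hj, ENNReal.ofReal_le_of_le_toReal ?_⟩
  rw [← measureReal_def, measureReal_compl (hs j), probReal_univ]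
  linarith

lemma eventually_le_mul_two_rpow (c : ℝ) {a δ : ℝ} (ha : 0 < a) (hδ : 0 < δ) :
    ∀ᶠ d : ℕ in atTop, c ≤ δ * (2 : ℝ) ^ (a * d) := by
  have h : Tendsto (fun d : ℕ => (2 : ℝ) ^ (a * d)) atTop atTop := by
    simp_rw [rpow_mul zero_le_two, rpow_natCast]
    exact tendsto_pow_atTop_atTop_of_one_lt (one_lt_rpow one_lt_two ha)
  filter_upwards [h.eventually_ge_atTop (c / δ)] with d hd
  rwa [div_le_iff₀' hδ] at hd

section Bernoulli

variable {p : ℝ}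

lemma bern_singleton (a : ZMod 2) :
    bern p {a} = ENNReal.ofReal (if a = 1 then p else 1 - p) := by
  obtain rfl | rfl : a = 0 ∨ a = 1 := by revert a; decide
  all_goals simp [bern, Set.indicator]

instance : IsFiniteMeasure (bern p) := by
  constructor; simp [bern, ENNReal.add_lt_top]

lemma isProbabilityMeasure_bern (hp0 : 0 ≤ p) (hp1 : p ≤ 1) : IsProbabilityMeasure (bern p) :=
  ⟨by simp [bern, ← ENNReal.ofReal_add (sub_nonneg.2 hp1) hp0]⟩

lemma integral_bern (hp0 : 0 ≤ p) (hp1 : p ≤ 1) (f : ZMod 2 → ℝ) :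
    ∫ a, f a ∂bern p = (1 - p) * f 0 + p * f 1 := by
  rw [bern, integral_add_measure ((integrable_dirac (by simp)).smul_measure ENNReal.ofReal_ne_top)
    ((integrable_dirac (by simp)).smul_measure ENNReal.ofReal_ne_top)]
  simp [integral_smul_measure, hp0, sub_nonneg.2 hp1]

end Bernoulli

section Noise

variable {p : ℝ} {ι : Type} [Fintype ι]

def numOnes (η : ι → ZMod 2) : ℕ := #{i | η i = 1}

lemma numOnes_le (η : ι → ZMod 2) : numOnes η ≤ Fintype.card ι := card_filter_le _ _

lemma natCast_numOnes (η : ι → ZMod 2) :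
    (numOnes η : ℝ) = ∑ i, if η i = 1 then (1 : ℝ) else 0 := by
  simp [numOnes]

lemma measureReal_bernPi_singleton (hp0 : 0 ≤ p) (hp1 : p ≤ 1) (η : ι → ZMod 2) :
    (bernPi p ι).real {η} = p ^ numOnes η * (1 - p) ^ (Fintype.card ι - numOnes η) := by
  rw [measureReal_def, ← Set.univ_pi_singleton, bernPi, Measure.pi_pi]
  simp only [bern_singleton, ENNReal.toReal_prod, apply_ite, ENNReal.toReal_ofReal hp0,
    ENNReal.toReal_ofReal (sub_nonneg.2 hp1)]
  rw [prod_ite, prod_const, prod_const, numOnes, ← card_univ,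
    ← card_filter_add_card_filter_not (s := univ) (fun i => η i = 1), Nat.add_sub_cancel_left]

lemma isProbabilityMeasure_bernPi (hp0 : 0 ≤ p) (hp1 : p ≤ 1) :
    IsProbabilityMeasure (bernPi p ι) :=
  have := isProbabilityMeasure_bern hp0 hp1
  inferInstanceAs (IsProbabilityMeasure (Measure.pi _))

lemma integral_numOnes (hp0 : 0 ≤ p) (hp1 : p ≤ 1) :
    ∫ η, (numOnes η : ℝ) ∂bernPi p ι = p * Fintype.card ι := by
  have := isProbabilityMeasure_bern hp0 hp1
  have := isProbabilityMeasure_bernPi (ι := ι) hp0 hp1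
  simp_rw [natCast_numOnes]
  rw [integral_finsetSum _ fun i _ => .of_finite, bernPi]
  simp only [integral_comp_eval (μ := fun _ => bern p) (f := fun a => if a = 1 then (1 : ℝ) else 0)
    (by fun_prop), integral_bern hp0 hp1]
  simp [mul_comm]

lemma variance_numOnes_le (hp0 : 0 ≤ p) (hp1 : p ≤ 1) :
    Var[fun η => (numOnes η : ℝ); bernPi p ι] ≤ Fintype.card ι / 4 := by
  have := isProbabilityMeasure_bern hp0 hp1
  set Y : ZMod 2 → ℝ := fun a => if a = 1 then 1 else 0
  have hY : ∀ a, Y a ∈ Set.Icc (0 : ℝ) 1 := fun a => by by_cases h : a = 1 <;> simp [Y, h]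
  have hsum : (fun η => (numOnes η : ℝ)) = ∑ i, fun η : ι → ZMod 2 => Y (η i) := by
    ext η; simp [natCast_numOnes, Y]
  rw [hsum, bernPi, variance_sum_pi fun i => memLp_of_bounded (.of_forall hY) (by fun_prop) 2]
  calc ∑ _i : ι, Var[Y; bern p] ≤ ∑ _i : ι, ((1 - 0) / 2 : ℝ) ^ 2 :=
        sum_le_sum fun i _ => variance_le_sq_of_bounded (.of_forall hY) (by fun_prop)
    _ = Fintype.card ι / 4 := by simp; ring

lemma measureReal_numOnes_le (hp0 : 0 ≤ p) (hp1 : p ≤ 1) {ε : ℝ} (hε : 0 < ε)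
    (hι : 0 < Fintype.card ι) :
    (bernPi p ι).real {η | (numOnes η : ℝ) ≤ (p - ε) * Fintype.card ι} ≤
      1 / (4 * ε ^ 2 * Fintype.card ι) := by
  have := isProbabilityMeasure_bernPi (ι := ι) hp0 hp1
  set n : ℝ := (Fintype.card ι : ℝ)
  have hn : 0 < n := by simpa [n] using hι
  have hmemLp : MemLp (fun η => (numOnes η : ℝ)) 2 (bernPi p ι) :=
    .of_bound (by fun_prop) n (.of_forall fun η => by
      rw [Real.norm_natCast]; exact Nat.cast_le.mpr (numOnes_le η))
  calc _ ≤ (bernPi p ι).real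
        {η | ε * n ≤ |(numOnes η : ℝ) - ∫ η, (numOnes η : ℝ) ∂bernPi p ι|} := by
        refine measureReal_mono fun η hη => ?_
        simp only [Set.mem_ofPred_eq, integral_numOnes hp0 hp1] at hη ⊢
        rw [abs_sub_comm, le_abs]
        left; linarith
    _ ≤ Var[fun η => (numOnes η : ℝ); bernPi p ι] / (ε * n) ^ 2 :=
        ENNReal.toReal_le_of_le_ofReal (div_nonneg (variance_nonneg _ _) (by positivity))
          (meas_ge_le_variance_div_sq hmemLp (by positivity))
    _ ≤ n / 4 / (ε * n) ^ 2 := by gcongr; exact variance_numOnes_le hp0 hp1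
    _ = 1 / (4 * ε ^ 2 * n) := by field_simp

end Noise

lemma pow_mul_one_sub_pow_le {p ε : ℝ} (hp0 : 0 < p) (hp : p ≤ 1 / 2) {n k : ℕ} (hk : k ≤ n)
    (hpk : (p - ε) * n ≤ k) :
    p ^ k * (1 - p) ^ (n - k) ≤ (2 : ℝ) ^ ((ε * logb 2 ((1 - p) / p) - H2 p) * n) := by
  have h1p : 0 < 1 - p := by linarith
  have hC : 0 ≤ logb 2 (1 - p) - logb 2 p :=
    sub_nonneg.2 (logb_le_logb_of_le one_lt_two hp0 (by linarith))
  have hpow : ∀ x : ℝ, 0 < x → ∀ m : ℕ, x ^ m = (2 : ℝ) ^ (logb 2 x * m) := fun x hx m => by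
    rw [rpow_mul zero_le_two, rpow_logb two_pos (by norm_num) hx, rpow_natCast]
  rw [hpow p hp0, hpow (1 - p) h1p, ← rpow_add two_pos, logb_div h1p.ne' hp0.ne', H2,
    Nat.cast_sub hk]
  apply rpow_le_rpow_of_exponent_le one_le_two
  -- with C = log₂(1-p) - log₂ p ≥ 0, the exponents are n·log₂(1-p) - k·C and n·log₂(1-p) - (p-ε)n·C
  nlinarith [mul_nonneg hC (sub_nonneg.2 hpk)]

section Decoding

variable {V : Type*} [AddGroup V] [Fintype V]

noncomputable def correctNoise (G : ℕ → V) (Dec : V → ℕ) (t j : ℕ) : Finset V :=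
  {η | |(j : ℝ) - Dec (G j + η)| ≤ t}

lemma card_correctNoise (G : ℕ → V) (Dec : V → ℕ) (t j : ℕ) :
    #(correctNoise G Dec t j) = #{x | |(j : ℝ) - Dec x| ≤ t} :=
  card_equiv (Equiv.addLeft (G j)) fun η => by simp [correctNoise]

lemma card_filter_abs_sub_le (N m t : ℕ) :
    #{j ∈ range N | |((j : ℕ) : ℝ) - m| ≤ t} ≤ 2 * t + 1 := by
  calc #{j ∈ range N | |((j : ℕ) : ℝ) - m| ≤ t} ≤ #(Icc (m - t) (m + t)) := by
        refine card_le_card fun j hj => ?_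
        obtain ⟨-, hj⟩ := mem_filter.1 hj
        rw [abs_le] at hj
        have h1 : j ≤ m + t := by exact_mod_cast (show (j : ℝ) ≤ m + t by linarith)
        have h2 : m ≤ j + t := by exact_mod_cast (show (m : ℝ) ≤ j + t by linarith)
        exact mem_Icc.2 ⟨by omega, h1⟩
    _ ≤ 2 * t + 1 := by rw [Nat.card_Icc]; omega

lemma sum_card_correctNoise_le (N t : ℕ) (G : ℕ → V) (Dec : V → ℕ) :
    ∑ j ∈ range N, #(correctNoise G Dec t j) ≤ (2 * t + 1) * Fintype.card V := by
  simp_rw [card_correctNoise]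
  calc ∑ j ∈ range N, #{x | |(j : ℝ) - Dec x| ≤ t}
      = ∑ x, #{j ∈ range N | |((j : ℕ) : ℝ) - Dec x| ≤ t} :=
        sum_card_bipartiteAbove_eq_sum_card_bipartiteBelow _
    _ ≤ ∑ _x : V, (2 * t + 1) := sum_le_sum fun x _ => card_filter_abs_sub_le N (Dec x) t
    _ = (2 * t + 1) * Fintype.card V := by simp [mul_comm]

end Decoding

lemma sum_measureReal_correctNoise_le {p ε : ℝ} (hp0 : 0 < p) (hp : p ≤ 1 / 2) (hε : 0 < ε)
    {ι : Type} [Fintype ι] [DecidableEq ι] (hι : 0 < Fintype.card ι) (N t : ℕ)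
    (G : ℕ → ι → ZMod 2) (Dec : (ι → ZMod 2) → ℕ) :
    ∑ j ∈ range N, (bernPi p ι).real (correctNoise G Dec t j) ≤
      N / (4 * ε ^ 2 * Fintype.card ι) +
        (2 * t + 1) * (2 : ℝ) ^ ((1 + ε * logb 2 ((1 - p) / p) - H2 p) * Fintype.card ι) := by
  have hp1 : p ≤ 1 := by linarith
  have := isProbabilityMeasure_bernPi (ι := ι) hp0.le hp1
  set n := Fintype.card ι
  set q : ℝ := 2 ^ ((ε * logb 2 ((1 - p) / p) - H2 p) * n) with hq_def
  set L := {η : ι → ZMod 2 | (numOnes η : ℝ) ≤ (p - ε) * n}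
  have hq : ∀ η ∉ L, (bernPi p ι).real {η} ≤ q := fun η hη => by
    rw [measureReal_bernPi_singleton hp0.le hp1]
    exact pow_mul_one_sub_pow_le hp0 hp (numOnes_le η) (not_le.1 hη).le
  have hcard : (∑ j ∈ range N, #(correctNoise G Dec t j) : ℝ) ≤ (2 * t + 1) * 2 ^ n := by
    exact_mod_cast (sum_card_correctNoise_le N t G Dec).trans_eq (by simp [n])
  calc ∑ j ∈ range N, (bernPi p ι).real (correctNoise G Dec t j)
      ≤ ∑ j ∈ range N, ((bernPi p ι).real L + q * #(correctNoise G Dec t j)) :=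
        sum_le_sum fun j _ => measureReal_le_add_mul_card _ L (by positivity) hq _
    _ = N * (bernPi p ι).real L + q * ∑ j ∈ range N, (#(correctNoise G Dec t j) : ℝ) := by
        rw [sum_add_distrib, sum_const, card_range, nsmul_eq_mul, mul_sum]
    _ ≤ N * (1 / (4 * ε ^ 2 * n)) + q * ((2 * t + 1) * 2 ^ n) := by
        gcongr
        exact measureReal_numOnes_le hp0.le hp1 hε hι
    _ = _ := by
        rw [mul_one_div, hq_def, add_sub_assoc, add_mul 1, one_mul, rpow_add two_pos,
          rpow_natCast]
        ring

theorem exists_ofReal_le_bernPi_compl_correctNoise {p ε δ : ℝ} (hp0 : 0 < p) (hp : p ≤ 1 / 2)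
    (hε : 0 < ε) {ι : Type} [Fintype ι] [DecidableEq ι] (hι : 0 < Fintype.card ι) {t N : ℕ}
    (hchebyshev : 1 / (4 * ε ^ 2 * Fintype.card ι) ≤ δ / 2)
    (hcount : 2 * t + 1 ≤ δ / 2 * (2 : ℝ) ^ (ε * logb 2 ((1 - p) / p) * Fintype.card ι))
    (hN : (2 : ℝ) ^ ((1 - H2 p + 2 * (ε * logb 2 ((1 - p) / p))) * Fintype.card ι) ≤ N)
    (G : ℕ → ι → ZMod 2) (Dec : (ι → ZMod 2) → ℕ) :
    ∃ j < N, ENNReal.ofReal (1 - δ) ≤ bernPi p ι (↑(correctNoise G Dec t j))ᶜ := by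
  have := isProbabilityMeasure_bernPi (ι := ι) hp0.le (by linarith)
  have hN0 : 0 < N := by exact_mod_cast (rpow_pos_of_pos two_pos _).trans_le hN
  refine exists_ofReal_le_measure_compl _ hN0 _ (fun j => (correctNoise G Dec t j).measurableSet)
    ((sum_measureReal_correctNoise_le hp0 hp hε hι N t G Dec).trans ?_)
  set γ := ε * logb 2 ((1 - p) / p)
  set n := (Fintype.card ι : ℝ)
  have hcount' : (2 * t + 1) * (2 : ℝ) ^ ((1 + γ - H2 p) * n) ≤ δ / 2 * N :=
    calc (2 * t + 1) * (2 : ℝ) ^ ((1 + γ - H2 p) * n)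
        ≤ δ / 2 * 2 ^ (γ * n) * 2 ^ ((1 + γ - H2 p) * n) := by gcongr
      _ = δ / 2 * 2 ^ ((1 - H2 p + 2 * γ) * n) := by rw [mul_assoc, ← rpow_add two_pos]; ring_nf
      _ ≤ δ / 2 * N := by
        have : 0 ≤ δ := by linarith [(one_div_pos.2 (by positivity : 0 < 4 * ε ^ 2 * n))]
        gcongr
  rw [div_eq_mul_one_div (N : ℝ)]
  nlinarith [mul_le_mul_of_nonneg_left hchebyshev (Nat.cast_nonneg N)]

theorem stmt2 (p : ℝ) (hp0 : 0 < p) (hp1 : p < 1 / 2) (θ : ℝ) (hθ : 0 < θ) (t : ℕ) :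
    -- for all sufficiently large d (depending on p, θ, t)
    ∃ d₀ : ℕ, ∀ d : ℕ, d₀ ≤ d →
    -- and all N with log₂(N)/d ≥ 1 - H₂(p) + θ
    ∀ N : ℕ, 1 - H2 p + θ ≤ Real.logb 2 (N : ℝ) / (d : ℝ) →
    -- for every encoder G and decoder Dec
    ∀ G : ℕ → Fin d → ZMod 2, ∀ Dec : (Fin d → ZMod 2) → ℕ, (∀ x, Dec x < N) →
    -- there is a message j on which the decoder errs by more than t w.p. ≥ 0.99
    ∃ j : ℕ, j < N ∧
      ENNReal.ofReal 0.99 ≤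
        bernPi p (Fin d) {η | (t : ℝ) < |(j : ℝ) - (Dec (G j + η) : ℝ)|} := by
  have hC : 0 < logb 2 ((1 - p) / p) := logb_pos one_lt_two (by rw [lt_div_iff₀ hp0]; linarith)
  set ε := θ / (2 * logb 2 ((1 - p) / p)) with hε
  have hεC : ε * logb 2 ((1 - p) / p) = θ / 2 := by rw [hε]; field_simp
  obtain ⟨d₀, hd₀⟩ := eventually_atTop.1 <| (eventually_gt_atTop 0).and <|
    ((tendsto_const_div_atTop_nhds_zero_nat (1 / (4 * ε ^ 2))).eventually
      (ge_mem_nhds (by norm_num : (0 : ℝ) < 0.01 / 2))).and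
    (eventually_le_mul_two_rpow (2 * t + 1) (half_pos hθ) (by norm_num : (0 : ℝ) < 0.01 / 2))
  refine ⟨d₀, fun d hd N hN G Dec hDec => ?_⟩
  obtain ⟨hd, hchebyshev, hcount⟩ := hd₀ d hd
  have hN0 : 0 < N := (Nat.zero_le _).trans_lt (hDec 0)
  have hNpow : (2 : ℝ) ^ ((1 - H2 p + θ) * d) ≤ N := by
    rw [← le_logb_iff_rpow_le one_lt_two (by exact_mod_cast hN0), ← le_div_iff₀ (by positivity)]
    exact hN
  obtain ⟨j, hj, hmeas⟩ := exists_ofReal_le_bernPi_compl_correctNoise (δ := 0.01) hp0 hp1.le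
    (by positivity : 0 < ε) (by simpa using hd)
    (by rw [Fintype.card_fin, ← div_div]; exact hchebyshev) (by rwa [Fintype.card_fin, hεC])
    (by rwa [Fintype.card_fin, hεC, mul_div_cancel₀ θ two_ne_zero]) G Dec
  refine ⟨j, hj, le_of_eq_of_le (by norm_num) (hmeas.trans_eq (congr_arg _ ?_))⟩
  ext η
  simp [correctNoise]
end

section
/- Fix p ∈ (0, 1/2). There exist constants c > 0 and t₀ > 0 (depending only on p) such that for every integer ℓ ≥ 1, every j ∈ {0, ..., ℓ}, and every t ≥ t₀ the following holds. Let u = 1^j 0^{ℓ−j} ∈ 𝔽₂^ℓ be the unary encoding of j, let η ∼ Ber(p)^ℓ, and let ĵ ∈ {0, ..., ℓ} be any minimizer of the Hamming distance Δ(u ⊕ η, 1^{j'} 0^{ℓ−j'}) over j' ∈ {0, ..., ℓ}. Then Pr_η[ |ĵ − j| ≥ t ] ≤ exp(−c · t). -/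
open MeasureTheory

/-- The unary encoding of j ∈ {0, ..., ℓ}: the string 1^j 0^{ℓ-j} ∈ 𝔽₂^ℓ. -/
def unary (ℓ j : ℕ) : Fin ℓ → ZMod 2 := fun i => if (i : ℕ) < j then 1 else 0

/-! If the decoder returns `j'` with `|j' - j| ≥ s`, then `1^{j'} 0^{ℓ-j'}` is at least as close
to `u + η` as `u` is; the two codewords differ exactly on a window `W` of `|j' - j|` positions,
so `η` must flip at least half of `W`. Each of the at most `2^|W|` flip patterns on `W` with
`k ≥ |W|/2` flips has probability `p^k (1-p)^(|W|-k) ≤ √(p(1-p))^|W|`, so this costs `q^|W|`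
with `q = 2√(p(1-p)) < 1`. A union bound over `j'` leaves a geometric tail `2 q^s / (1 - q)`,
which is at most `exp (-c t)` once `t` is large. -/

open Finset

instance (p : ℝ) : IsFiniteMeasure (bern p) := ⟨by simp [bern]⟩

lemma isProbabilityMeasure_bern_s9 {p : ℝ} (h0 : 0 ≤ p) (h1 : p ≤ 1) :
    IsProbabilityMeasure (bern p) :=
  ⟨by simp [bern, ← ENNReal.ofReal_add (sub_nonneg.2 h1) h0]⟩

@[simp] lemma bern_singleton_one (p : ℝ) : bern p {1} = ENNReal.ofReal p := by simp [bern]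

@[simp] lemma bern_singleton_zero (p : ℝ) : bern p {0} = ENNReal.ofReal (1 - p) := by simp [bern]

lemma pow_mul_one_sub_pow_le_sqrt_pow {p : ℝ} (h0 : 0 ≤ p) (hp : p ≤ 1 / 2) {k s : ℕ}
    (hks : k ≤ s) (hsk : s ≤ 2 * k) :
    p ^ k * (1 - p) ^ (s - k) ≤ √(p * (1 - p)) ^ s := by
  set r := √(p * (1 - p))
  have hsq : r ^ 2 = p * (1 - p) := Real.sq_sqrt (by nlinarith)
  have hp_le : p ≤ r := Real.le_sqrt_of_sq_le (by nlinarith)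
  obtain ⟨a, rfl⟩ : ∃ a, s = k + a := ⟨s - k, by omega⟩
  obtain ⟨d, rfl⟩ : ∃ d, k = a + d := ⟨k - a, by omega⟩
  calc p ^ (a + d) * (1 - p) ^ (a + d + a - (a + d))
      = (p * (1 - p)) ^ a * p ^ d := by rw [Nat.add_sub_cancel_left, mul_pow]; ring
    _ ≤ (p * (1 - p)) ^ a * r ^ d :=
        mul_le_mul_of_nonneg_left (pow_le_pow_left₀ h0 hp_le d)
          (pow_nonneg (mul_nonneg h0 (by linarith)) a)
    _ = r ^ (a + d + a) := by rw [← hsq]; ring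

lemma two_mul_sqrt_mul_one_sub_lt_one {p : ℝ} (hp : p ≠ 1 / 2) : 2 * √(p * (1 - p)) < 1 := by
  have : (1 - 2 * p) ^ 2 ≠ 0 := pow_ne_zero 2 fun h => hp (by linarith)
  rw [← lt_div_iff₀' two_pos, Real.sqrt_lt' (by norm_num)]
  nlinarith [(sq_nonneg (1 - 2 * p)).lt_of_ne' this]

section Bernoulli

variable {ι : Type} [Fintype ι] {p : ℝ}

lemma bernPi_cylinder (h0 : 0 ≤ p) (h1 : p ≤ 1) (W : Finset ι) (x : ι → ZMod 2) :
    bernPi p ι {η | ∀ i ∈ W, η i = x i} = ∏ i ∈ W, bern p {x i} := by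
  classical
  have := isProbabilityMeasure_bern_s9 h0 h1
  have hpi : {η : ι → ZMod 2 | ∀ i ∈ W, η i = x i}
      = Set.univ.pi fun i => if i ∈ (W : Set ι) then {x i} else Set.univ := by
    rw [Set.pi_univ_ite]; ext; simp [Set.mem_pi]
  rw [hpi, bernPi, Measure.pi_pi]
  simp [apply_ite, prod_ite_mem]

lemma bernPi_pattern [DecidableEq ι] (h0 : 0 ≤ p) (h1 : p ≤ 1) {T W : Finset ι} (hTW : T ⊆ W) :
    bernPi p ι {η | ∀ i ∈ W, η i = if i ∈ T then 1 else 0}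
      = ENNReal.ofReal (p ^ #T * (1 - p) ^ (#W - #T)) := by
  rw [bernPi_cylinder h0 h1, ENNReal.ofReal_mul (pow_nonneg h0 _),
    ENNReal.ofReal_pow h0, ENNReal.ofReal_pow (sub_nonneg.2 h1), ← card_sdiff_of_subset hTW]
  simp only [apply_ite, bern_singleton_one, bern_singleton_zero]
  rw [prod_ite, prod_const, prod_const, filter_mem_eq_inter, inter_eq_right.2 hTW,
    filter_notMem_eq_sdiff]

def halfFlipped (W : Finset ι) : Set (ι → ZMod 2) :=
  {η | #W ≤ 2 * #{i ∈ W | η i ≠ 0}}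

lemma bernPi_halfFlipped_le (h0 : 0 ≤ p) (hp : p ≤ 1 / 2) (W : Finset ι) :
    bernPi p ι (halfFlipped W) ≤ ENNReal.ofReal ((2 * √(p * (1 - p))) ^ #W) := by
  classical
  set patterns := {T ∈ W.powerset | #W ≤ 2 * #T}
  have hcover : halfFlipped W ⊆
      ⋃ T ∈ patterns, {η | ∀ i ∈ W, η i = if i ∈ T then 1 else 0} := by
    intro η hη
    refine Set.mem_biUnion (x := {i ∈ W | η i ≠ 0}) ?_ fun i hi => ?_
    · simpa [patterns, halfFlipped] using hη
    · have : ∀ a : ZMod 2, a ≠ 0 → a = 1 := by decide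
      by_cases h : η i = 0 <;> simp_all
  have hpattern : ∀ T ∈ patterns, bernPi p ι {η | ∀ i ∈ W, η i = if i ∈ T then 1 else 0}
      ≤ ENNReal.ofReal (√(p * (1 - p)) ^ #W) := by
    intro T hT
    obtain ⟨hTW, hcard⟩ := by simpa [patterns] using hT
    rw [bernPi_pattern h0 (by linarith) hTW]
    exact ENNReal.ofReal_le_ofReal
      (pow_mul_one_sub_pow_le_sqrt_pow h0 hp (card_le_card hTW) hcard)
  calc bernPi p ι (halfFlipped W)
      ≤ ∑ T ∈ patterns, bernPi p ι {η | ∀ i ∈ W, η i = if i ∈ T then 1 else 0} :=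
        (measure_mono hcover).trans (measure_biUnion_finset_le _ _)
    _ ≤ ∑ T ∈ W.powerset, ENNReal.ofReal (√(p * (1 - p)) ^ #W) :=
        (sum_le_sum hpattern).trans (sum_le_sum_of_subset (filter_subset _ _))
    _ = ENNReal.ofReal ((2 * √(p * (1 - p))) ^ #W) := by
        rw [sum_const, card_powerset, nsmul_eq_mul, mul_pow,
          ENNReal.ofReal_mul (by positivity)]
        norm_cast

lemma mem_halfFlipped_of_hammingDist_le [DecidableEq ι] {u u' η : ι → ZMod 2}
    (h : hammingDist (u + η) u' ≤ hammingDist (u + η) u) :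
    η ∈ halfFlipped {i | u' i ≠ u i} := by
  have hcoord : ∀ a b c : ZMod 2,
      (if a + b ≠ c then 1 else 0) + 2 * (if c ≠ a ∧ b ≠ 0 then 1 else 0)
        = (if a + b ≠ a then 1 else 0) + (if c ≠ a then 1 else 0) := by decide
  have hcount : hammingDist (u + η) u' + 2 * #{i | u' i ≠ u i ∧ η i ≠ 0}
      = hammingDist (u + η) u + #{i | u' i ≠ u i} := by
    simp only [hammingDist, card_filter, mul_sum, ← sum_add_distrib, Pi.add_apply]
    exact sum_congr rfl fun i _ => hcoord (u i) (η i) (u' i)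
  simp only [halfFlipped, filter_filter, Set.mem_ofPred_eq]
  omega

end Bernoulli

lemma card_unary_ne {ℓ j j' : ℕ} (hj : j ≤ ℓ) (hj' : j' ≤ ℓ) :
    #{i | unary ℓ j' i ≠ unary ℓ j i} = Nat.dist j j' := by
  wlog hle : j ≤ j' generalizing j j'
  · simp_rw [ne_comm (a := unary ℓ j' _), Nat.dist_comm j]
    exact this hj' hj (by omega)
  have hdiff : univ.filter (fun i => unary ℓ j' i ≠ unary ℓ j i)
      = univ.filter (fun i : Fin ℓ => i < j') \ univ.filter (fun i : Fin ℓ => i < j) := by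
    ext i
    rw [mem_filter]
    simp only [unary]
    split_ifs <;> simp_all
    omega
  have hsub : univ.filter (fun i : Fin ℓ => i < j) ⊆ univ.filter (fun i : Fin ℓ => i < j') :=
    monotone_filter_right _ fun i _ (h : (i : ℕ) < j) => h.trans_le hle
  rw [hdiff, card_sdiff_of_subset hsub,
    Fin.card_filter_val_lt, Fin.card_filter_val_lt, Nat.dist_eq_sub_of_le hle]
  omega

lemma sum_pow_le_of_le {q : ℝ} (hq0 : 0 ≤ q) (hq1 : q < 1) {s : ℕ} (T : Finset ℕ)
    (hT : ∀ m ∈ T, s ≤ m) :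
    ∑ m ∈ T, q ^ m ≤ q ^ s / (1 - q) :=
  calc ∑ m ∈ T, q ^ m ≤ ∑ m ∈ Ico s (T.sup id + 1), q ^ m :=
        sum_le_sum_of_subset_of_nonneg
          (fun m hm => mem_Ico.2 ⟨hT m hm, Nat.lt_succ_of_le (le_sup (f := id) hm)⟩)
          (fun _ _ _ => pow_nonneg hq0 _)
    _ ≤ q ^ s / (1 - q) := geom_sum_Ico_le_of_lt_one hq0 hq1

lemma sum_pow_dist_le {q : ℝ} (hq0 : 0 ≤ q) (hq1 : q < 1) {j s : ℕ} (S : Finset ℕ)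
    (hS : ∀ j' ∈ S, s ≤ Nat.dist j j') :
    ∑ j' ∈ S, q ^ Nat.dist j j' ≤ 2 * (q ^ s / (1 - q)) := by
  have hfiber : ∀ m, #{j' ∈ S | Nat.dist j j' = m} ≤ 2 := fun m =>
    (card_le_card (t := {j + m, j - m}) fun j' hj' => by
      have := (mem_filter.1 hj').2
      simp only [mem_insert, mem_singleton]
      unfold Nat.dist at this
      omega).trans card_le_two
  calc ∑ j' ∈ S, q ^ Nat.dist j j'
      = ∑ m ∈ S.image (Nat.dist j), #{j' ∈ S | Nat.dist j j' = m} • q ^ m :=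
        sum_comp (fun m => q ^ m) _
    _ ≤ ∑ m ∈ S.image (Nat.dist j), 2 * q ^ m := by
        refine sum_le_sum fun m _ => ?_
        rw [nsmul_eq_mul]
        exact mul_le_mul_of_nonneg_right (by exact_mod_cast hfiber m) (pow_nonneg hq0 _)
    _ ≤ 2 * (q ^ s / (1 - q)) := by
        rw [← mul_sum]
        refine mul_le_mul_of_nonneg_left (sum_pow_le_of_le hq0 hq1 _ ?_) zero_le_two
        simpa using hS

lemma Nat.cast_dist_eq_abs {R : Type*} [Ring R] [LinearOrder R] [IsStrictOrderedRing R]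
    (m n : ℕ) : (Nat.dist m n : R) = |(m : R) - n| := by
  rcases le_total m n with h | h
  · rw [Nat.dist_eq_sub_of_le h, Nat.cast_sub h, abs_sub_comm, abs_of_nonneg (by simpa)]
  · rw [Nat.dist_eq_sub_of_le_right h, Nat.cast_sub h, abs_of_nonneg (by simpa)]

lemma exists_mul_pow_le_exp {q : ℝ} (hq0 : 0 < q) (hq1 : q < 1) (K : ℝ) :
    ∃ c t₀ : ℝ, 0 < c ∧ 0 < t₀ ∧
      ∀ t, t₀ ≤ t → ∀ s : ℕ, t ≤ s → K * q ^ s ≤ Real.exp (-c * t) := by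
  -- half of the decay rate `-log q` is spent on absorbing `K`
  set c := -Real.log q / 2
  have hc : 0 < c := by have := Real.log_neg hq0 hq1; simp only [c]; linarith
  refine ⟨c, max 1 (K / c), hc, by positivity, fun t ht s hts => ?_⟩
  have hK : K ≤ Real.exp (c * t) := by
    have : K ≤ c * t := (div_le_iff₀' hc).1 ((le_max_right _ _).trans ht)
    linarith [Real.add_one_le_exp (c * t)]
  have hqs : q ^ s ≤ Real.exp (-2 * c * t) := by
    rw [← Real.rpow_natCast, Real.rpow_def_of_pos hq0]
    have hlog : Real.log q = -2 * c := by simp only [c]; ring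
    rw [Real.exp_le_exp, hlog]
    nlinarith
  calc K * q ^ s ≤ Real.exp (c * t) * Real.exp (-2 * c * t) :=
        mul_le_mul hK hqs (by positivity) (Real.exp_nonneg _)
    _ = Real.exp (-c * t) := by rw [← Real.exp_add]; ring_nf

def IsMinDistDecoder (ℓ : ℕ) (dec : (Fin ℓ → ZMod 2) → ℕ) : Prop :=
  ∀ x, dec x ≤ ℓ ∧ ∀ j' : ℕ, j' ≤ ℓ → hammingDist x (unary ℓ (dec x)) ≤ hammingDist x (unary ℓ j')

lemma IsMinDistDecoder.bernPi_le_dist_le {ℓ : ℕ} {dec : (Fin ℓ → ZMod 2) → ℕ}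
    (hdec : IsMinDistDecoder ℓ dec) {p : ℝ} (h0 : 0 ≤ p) (hp : p < 1 / 2) {j : ℕ} (hj : j ≤ ℓ)
    (s : ℕ) :
    bernPi p (Fin ℓ) {η | s ≤ Nat.dist j (dec (unary ℓ j + η))} ≤
      ENNReal.ofReal (2 / (1 - 2 * √(p * (1 - p))) * (2 * √(p * (1 - p))) ^ s) := by
  set q := 2 * √(p * (1 - p))
  have hq1 : q < 1 := two_mul_sqrt_mul_one_sub_lt_one hp.ne
  set S := {j' ∈ range (ℓ + 1) | s ≤ Nat.dist j j'}
  set E := fun j' => halfFlipped {i | unary ℓ j' i ≠ unary ℓ j i}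
  have hcover : {η | s ≤ Nat.dist j (dec (unary ℓ j + η))} ⊆ ⋃ j' ∈ S, E j' := by
    intro η hη
    obtain ⟨hdec_le, hdec_min⟩ := hdec (unary ℓ j + η)
    exact Set.mem_biUnion (mem_filter.2 ⟨mem_range.2 (Nat.lt_succ_of_le hdec_le), hη⟩)
      (mem_halfFlipped_of_hammingDist_le (hdec_min j hj))
  have hE : ∀ j' ∈ S, bernPi p (Fin ℓ) (E j') ≤ ENNReal.ofReal (q ^ Nat.dist j j') := by
    intro j' hj'
    have hj'ℓ : j' ≤ ℓ := Nat.lt_succ_iff.1 (mem_range.1 (mem_filter.1 hj').1)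
    rw [← card_unary_ne hj hj'ℓ]
    exact bernPi_halfFlipped_le h0 hp.le _
  calc bernPi p (Fin ℓ) {η | s ≤ Nat.dist j (dec (unary ℓ j + η))}
      ≤ ∑ j' ∈ S, bernPi p (Fin ℓ) (E j') :=
        (measure_mono hcover).trans (measure_biUnion_finset_le _ _)
    _ ≤ ∑ j' ∈ S, ENNReal.ofReal (q ^ Nat.dist j j') := sum_le_sum hE
    _ = ENNReal.ofReal (∑ j' ∈ S, q ^ Nat.dist j j') :=
        (ENNReal.ofReal_sum_of_nonneg fun _ _ => by positivity).symm
    _ ≤ ENNReal.ofReal (2 / (1 - q) * q ^ s) := by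
        refine ENNReal.ofReal_le_ofReal
          ((sum_pow_dist_le (s := s) (by positivity) hq1 S fun j' hj' => ?_).trans_eq (by ring))
        exact (mem_filter.1 hj').2

/-- For p ∈ (0,1/2) there are constants c, t₀ > 0 (depending only on p) such that for
every ℓ ≥ 1, j ≤ ℓ, t ≥ t₀, and every minimum-distance decoder `dec` for the unary code
(dec x minimizes the Hamming distance to a unary codeword), the estimate
ĵ = dec(1^j 0^{ℓ-j} ⊕ η) satisfies Pr_{η ∼ Ber(p)^ℓ}[ |ĵ - j| ≥ t ] ≤ exp(-c·t). -/
theorem stmt9 (p : ℝ) (hp0 : 0 < p) (hp1 : p < 1 / 2) :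
    ∃ c t₀ : ℝ, 0 < c ∧ 0 < t₀ ∧
      ∀ ℓ : ℕ, 1 ≤ ℓ → ∀ j : ℕ, j ≤ ℓ → ∀ t : ℝ, t₀ ≤ t →
      ∀ dec : (Fin ℓ → ZMod 2) → ℕ,
        (∀ x, dec x ≤ ℓ ∧
          ∀ j' : ℕ, j' ≤ ℓ → hammingDist x (unary ℓ (dec x)) ≤ hammingDist x (unary ℓ j')) →
        bernPi p (Fin ℓ) {η | t ≤ |(dec (unary ℓ j + η) : ℝ) - (j : ℝ)|} ≤
          ENNReal.ofReal (Real.exp (-c * t)) := by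
  set q := 2 * √(p * (1 - p))
  have hq0 : 0 < q := mul_pos two_pos (Real.sqrt_pos.2 (by nlinarith))
  obtain ⟨c, t₀, hc, ht₀, hexp⟩ :=
    exists_mul_pow_le_exp hq0 (two_mul_sqrt_mul_one_sub_lt_one hp1.ne) (2 / (1 - q))
  refine ⟨c, t₀, hc, ht₀, fun ℓ _ j hj t ht dec hdec => ?_⟩
  calc bernPi p (Fin ℓ) {η | t ≤ |(dec (unary ℓ j + η) : ℝ) - (j : ℝ)|}
      ≤ bernPi p (Fin ℓ) {η | ⌈t⌉₊ ≤ Nat.dist j (dec (unary ℓ j + η))} :=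
        measure_mono fun η hη => Nat.ceil_le.2 (by rwa [Nat.cast_dist_eq_abs, abs_sub_comm])
    _ ≤ ENNReal.ofReal (2 / (1 - q) * q ^ ⌈t⌉₊) :=
        IsMinDistDecoder.bernPi_le_dist_le hdec hp0.le hp1 hj _
    _ ≤ ENNReal.ofReal (Real.exp (-c * t)) :=
        ENNReal.ofReal_le_ofReal (hexp t ht _ (Nat.le_ceil t))
end

section
/- In the robust Gray code construction, for every i ∈ {0, ..., 2^{kk'} − 2} and all j, j' ∈ {r_i, r_i + 1, ..., r_{i+1}}, the Hamming distance satisfies Δ(G(j), G(j')) = |j − j'| (where G(r_{i+1}) = w_{i+1}). -/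
open Finset MeasureTheory

noncomputable section

namespace RG

/-- The binary reflected (Gray) code R_m : {0, ..., 2^m - 1} → 𝔽₂^m. -/
def brc : (m : ℕ) → ℕ → (Fin m → ZMod 2)
  | 0, _ => Fin.elim0
  | m + 1, i =>
      if i < 2 ^ m then Fin.snoc (brc m i) 0
      else Fin.snoc (brc m (2 ^ (m + 1) - i - 1)) 1

/-- The flip index z_i: the (unique, for 1 ≤ i ≤ 2^K - 1) coordinate at which
R_K(i-1) and R_K(i) differ; z_0 = 0. -/
def zi (K i : ℕ) : ℕ :=
  if h : ∃ z : Fin K, brc K (i - 1) z ≠ brc K i z then (h.choose : ℕ) else 0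

variable {n n' : ℕ}

/-- The i-th codeword c_i = Aᵀ R_K(i) of the concatenated code, presented as its n
inner blocks of length n'. -/
def cw (K : ℕ) (A : Fin K → Fin n → Fin n' → ZMod 2) (i : ℕ) : Fin n → Fin n' → ZMod 2 :=
  ∑ z : Fin K, brc K i z • A z

/-- The length d = n'·n + B·(n+1) + L of the intermediate code and of the Gray code. -/
def D (n n' B L : ℕ) : ℕ := n' * n + B * (n + 1) + L

/-- The i-th intermediate codeword
w_i = L_{z_i} ∘ b_i^B ∘ c_i[1] ∘ b_i^B ∘ ... ∘ b_i^B ∘ c_i[n] ∘ b_i^B, where b_i = i mod 2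
and L_z repeats each of the log₂(K) bits of the binary expansion of z exactly
L / log₂(K) times. -/
def w (B L K : ℕ) (A : Fin K → Fin n → Fin n' → ZMod 2) (i : ℕ) :
    Fin (D n n' B L) → ZMod 2 := fun p =>
  if (p : ℕ) < L then
    (if Nat.testBit (zi K i) ((p : ℕ) / (L / Nat.log 2 K)) then 1 else 0)
  else
    if ((p : ℕ) - L) % (B + n') < B then (i : ZMod 2)
    else
      if hm : ((p : ℕ) - L) / (B + n') < n then
        if hr : ((p : ℕ) - L) % (B + n') - B < n' then
          cw K A i ⟨((p : ℕ) - L) / (B + n'), hm⟩ ⟨((p : ℕ) - L) % (B + n') - B, hr⟩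
        else 0
      else 0

/-- r_i = Σ_{t=1}^{i} Δ(w_{t-1}, w_t). -/
def r (B L K : ℕ) (A : Fin K → Fin n → Fin n' → ZMod 2) (i : ℕ) : ℕ :=
  ∑ t ∈ Finset.Icc 1 i, hammingDist (w B L K A (t - 1)) (w B L K A t)

/-- N = r_{2^K - 1}, the number of codewords of the Gray code. -/
def NN (B L K : ℕ) (A : Fin K → Fin n → Fin n' → ZMod 2) : ℕ := r B L K A (2 ^ K - 1)

/-- For j < N, the index i such that r_i ≤ j < r_{i+1}. -/
def gidx (B L K : ℕ) (A : Fin K → Fin n → Fin n' → ZMod 2) (j : ℕ) : ℕ :=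
  sSup {i | i ≤ 2 ^ K - 1 ∧ r B L K A i ≤ j}

/-- The Gray code G : {0, ..., N-1} → 𝔽₂^d.  With i such that r_i ≤ j < r_{i+1}, G(j)
agrees with w_{i+1} on the first j - r_i coordinates at which w_i and w_{i+1} differ
(and everything before them) and with w_i afterwards. -/
def gray (B L K : ℕ) (A : Fin K → Fin n → Fin n' → ZMod 2) (j : ℕ) :
    Fin (D n n' B L) → ZMod 2 := fun p =>
  if (Finset.univ.filter fun q : Fin (D n n' B L) =>
        q ≤ p ∧ w B L K A (gidx B L K A j) q ≠ w B L K A (gidx B L K A j + 1) q).card ≤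
      j - r B L K A (gidx B L K A j)
  then w B L K A (gidx B L K A j + 1) p
  else w B L K A (gidx B L K A j) p

/-- The index (among the 2n+2 chunks L̃, s_1, c̃_1, s_2, c̃_2, ..., s_n, c̃_n, s_{n+1})
of the chunk containing position p: chunk 0 is L̃, chunk 2m-1 is s_m, chunk 2m is c̃_m,
and chunk 2n+1 is s_{n+1}. -/
def chunkIdx (n' B L : ℕ) (p : ℕ) : ℕ :=
  if p < L then 0
  else 1 + 2 * ((p - L) / (B + n')) + if (p - L) % (B + n') < B then 0 else 1

end RG

end

/-!
Between `w i` and `w (i + 1)` the Gray code flips the coordinates at which they differ one at a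
time, from left to right, so that `G j` (for `r i ≤ j ≤ r (i + 1)`) has flipped exactly those of
rank at most `j - r i` in the set of differing coordinates. Hence `G j` and `G j'` differ exactly at
the differing coordinates whose rank lies between `j - r i` and `j' - r i`, and there are
`|j - j'|` of them, because ranking is a bijection onto `{1, …, #differing coordinates}`.
Care is needed only at `j = r (i + 1)`: there `G` is defined through a later interval (a later
one still if some `w`'s repeat), but it is `w (i + 1)` all the same.
-/

section Rank

variable {α : Type*} [LinearOrder α] (s : Finset α)

theorem strictMonoOn_card_filter_le : StrictMonoOn (fun p => #{q ∈ s | q ≤ p}) s := by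
  intro p _ p' hp' hpp'
  have hsub : {q ∈ s | q ≤ p} ⊆ {q ∈ s | q ≤ p'} :=
    monotone_filter_right s fun _ _ hq => hq.trans hpp'.le
  refine card_lt_card ((ssubset_iff_of_subset hsub).2 ⟨p', ?_, ?_⟩)
  · simpa using hp'
  · simp [hpp']

theorem image_card_filter_le : s.image (fun p => #{q ∈ s | q ≤ p}) = Icc 1 #s := by
  refine eq_of_subset_of_card_le (fun x hx => ?_) ?_
  · obtain ⟨p, hp, rfl⟩ := mem_image.1 hx
    have hpos : 0 < #{q ∈ s | q ≤ p} := card_pos.2 ⟨p, by simpa using hp⟩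
    exact mem_Icc.2 ⟨hpos, card_filter_le _ _⟩
  · rw [card_image_of_injOn (strictMonoOn_card_filter_le s).injOn, Nat.card_Icc,
      Nat.add_sub_cancel]

theorem card_filter_card_filter_le_mem_Ioc {a b : ℕ} (hb : b ≤ #s) :
    #{p ∈ s | #{q ∈ s | q ≤ p} ∈ Ioc a b} = b - a := by
  have hIoc : {x ∈ Icc 1 #s | x ∈ Ioc a b} = Ioc a b := by
    ext
    simp only [mem_filter, mem_Icc, mem_Ioc]
    omega
  rw [← card_image_of_injOn ((strictMonoOn_card_filter_le s).injOn.mono (filter_subset _ _)),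
    ← filter_image (p := (· ∈ Ioc a b)), image_card_filter_le, hIoc, Nat.card_Ioc]

end Rank

section Interpolate

variable {ι β : Type*} [Fintype ι] [LinearOrder ι] [DecidableEq β]

def interpolate (u v : ι → β) (m : ℕ) : ι → β :=
  fun p => if #{q | q ≤ p ∧ u q ≠ v q} ≤ m then v p else u p

variable (u v : ι → β)

theorem interpolate_zero : interpolate u v 0 = u := by
  funext p
  unfold interpolate
  split_ifs with h
  · by_contra hvu
    have hp : p ∈ ({q | q ≤ p ∧ u q ≠ v q} : Finset ι) := by simp [Ne.symm hvu]
    exact (card_pos.2 ⟨p, hp⟩).ne' (Nat.le_zero.1 h)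
  · rfl

theorem interpolate_hammingDist : interpolate u v (hammingDist u v) = v := by
  funext p
  refine if_pos (card_le_card fun q hq => ?_)
  simp only [mem_filter, mem_univ, true_and] at hq ⊢
  exact hq.2

theorem interpolate_ne_interpolate_iff {a b : ℕ} (hab : a ≤ b) (p : ι) :
    interpolate u v a p ≠ interpolate u v b p ↔
      u p ≠ v p ∧ #{q | q ≤ p ∧ u q ≠ v q} ∈ Ioc a b := by
  unfold interpolate
  generalize #{q | q ≤ p ∧ u q ≠ v q} = k
  by_cases huv : u p = v p
  · simp [huv]
  · rw [mem_Ioc]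
    split_ifs <;> simp only [huv, Ne.symm huv, ne_eq, not_false_eq_true, not_true_eq_false,
      true_and, true_iff, false_iff] <;> omega

theorem hammingDist_interpolate {a b : ℕ} (ha : a ≤ hammingDist u v)
    (hb : b ≤ hammingDist u v) :
    hammingDist (interpolate u v a) (interpolate u v b) = Nat.dist a b := by
  wlog hab : a ≤ b generalizing a b
  · rw [hammingDist_comm, Nat.dist_comm]
    exact this hb ha (le_of_not_ge hab)
  set S : Finset ι := {q | u q ≠ v q}
  have hrank (p : ι) : #{q | q ≤ p ∧ u q ≠ v q} = #{q ∈ S | q ≤ p} := by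
    rw [filter_filter]
    simp only [and_comm]
  calc hammingDist (interpolate u v a) (interpolate u v b)
      = #{p | u p ≠ v p ∧ #{q | q ≤ p ∧ u q ≠ v q} ∈ Ioc a b} :=
        congrArg card (filter_congr fun p _ => interpolate_ne_interpolate_iff u v hab p)
    _ = #{p ∈ S | #{q ∈ S | q ≤ p} ∈ Ioc a b} := by rw [filter_filter]; simp only [hrank]
    _ = Nat.dist a b := by
        rw [Nat.dist_eq_sub_of_le hab]
        exact card_filter_card_filter_le_mem_Ioc S hb

end Interpolate

namespace RG

variable {n n' : ℕ} {B L K : ℕ} {A : Fin K → Fin n → Fin n' → ZMod 2}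

theorem r_succ (i : ℕ) :
    r B L K A (i + 1) = r B L K A i + hammingDist (w B L K A i) (w B L K A (i + 1)) := by
  rw [r, sum_Icc_succ_top (Nat.le_add_left 1 i), Nat.add_sub_cancel]
  rfl

theorem r_mono : Monotone (r B L K A) :=
  monotone_nat_of_le_succ fun i => (r_succ i).symm ▸ Nat.le_add_right _ _

theorem hammingDist_w_add_r_le {a b : ℕ} (hab : a ≤ b) :
    hammingDist (w B L K A a) (w B L K A b) + r B L K A a ≤ r B L K A b := by
  induction b, hab using Nat.le_induction with
  | base => simp
  | succ b _ ih =>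
    rw [r_succ]
    have := hammingDist_triangle (w B L K A a) (w B L K A b) (w B L K A (b + 1))
    omega

theorem gray_eq_interpolate_gidx (j : ℕ) :
    gray B L K A j = interpolate (w B L K A (gidx B L K A j)) (w B L K A (gidx B L K A j + 1))
      (j - r B L K A (gidx B L K A j)) :=
  rfl

theorem le_gidx_and_r_gidx_le {i j : ℕ} (hi : i ≤ 2 ^ K - 1) (hij : r B L K A i ≤ j) :
    i ≤ gidx B L K A j ∧ r B L K A (gidx B L K A j) ≤ j := by
  set S : Set ℕ := {i | i ≤ 2 ^ K - 1 ∧ r B L K A i ≤ j}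
  have hiS : i ∈ S := ⟨hi, hij⟩
  have hbdd : BddAbove S := ⟨2 ^ K - 1, fun _ h => h.1⟩
  exact ⟨le_csSup hbdd hiS, (Nat.sSup_mem ⟨i, hiS⟩ hbdd).2⟩

theorem gidx_eq {i j : ℕ} (hi : i ≤ 2 ^ K - 1) (hij : r B L K A i ≤ j)
    (hji : j < r B L K A (i + 1)) : gidx B L K A j = i := by
  obtain ⟨hle, hr⟩ := le_gidx_and_r_gidx_le hi hij
  by_contra hne
  have : r B L K A (i + 1) ≤ r B L K A (gidx B L K A j) := r_mono (by omega)
  omega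

theorem gray_r {i : ℕ} (hi : i ≤ 2 ^ K - 1) : gray B L K A (r B L K A i) = w B L K A i := by
  rw [gray_eq_interpolate_gidx]
  set g := gidx B L K A (r B L K A i)
  obtain ⟨hle, hr⟩ : i ≤ g ∧ r B L K A g ≤ r B L K A i := le_gidx_and_r_gidx_le hi le_rfl
  have hw : hammingDist (w B L K A i) (w B L K A g) + r B L K A i ≤ r B L K A g :=
    hammingDist_w_add_r_le hle
  have hzero : hammingDist (w B L K A i) (w B L K A g) = 0 := by omega
  rw [Nat.sub_eq_zero_of_le (by omega), interpolate_zero, hammingDist_eq_zero.1 hzero]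

theorem gray_eq_interpolate {i j : ℕ} (hi : i + 1 ≤ 2 ^ K - 1) (hij : r B L K A i ≤ j)
    (hji : j ≤ r B L K A (i + 1)) :
    gray B L K A j = interpolate (w B L K A i) (w B L K A (i + 1)) (j - r B L K A i) := by
  rcases hji.lt_or_eq with hlt | rfl
  · rw [gray_eq_interpolate_gidx, gidx_eq (by omega) hij hlt]
  · rw [gray_r hi, r_succ, Nat.add_sub_cancel_left, interpolate_hammingDist]

end RG

theorem stmt17_general (k' k n n' B L : ℕ)
    (A : Fin (k * k') → Fin n → Fin n' → ZMod 2) :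
    ∀ i : ℕ, i + 1 ≤ 2 ^ (k * k') - 1 →
      ∀ j j' : ℕ,
        RG.r B L (k * k') A i ≤ j → j ≤ RG.r B L (k * k') A (i + 1) →
        RG.r B L (k * k') A i ≤ j' → j' ≤ RG.r B L (k * k') A (i + 1) →
        hammingDist (RG.gray B L (k * k') A j) (RG.gray B L (k * k') A j') =
          Nat.dist j j' := by
  intro i hi j j' hj₁ hj₂ hj'₁ hj'₂
  have hlen := RG.r_succ (B := B) (L := L) (A := A) i
  rw [RG.gray_eq_interpolate hi hj₁ hj₂, RG.gray_eq_interpolate hi hj'₁ hj'₂,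
    hammingDist_interpolate _ _ (by omega) (by omega)]
  simp only [Nat.dist]
  omega

/-- within one interval [r_i, r_{i+1}], Hamming distance between codewords
of G equals the distance between the indices: Δ(G(j), G(j')) = |j - j'|. -/
theorem stmt17 (k' k n n' B L : ℕ)
    (hk' : 1 ≤ k') (hk : 1 ≤ k) (hn : 1 ≤ n) (hn' : 1 ≤ n') (hB : 1 ≤ B) (hL : 1 ≤ L)
    -- kk' is a power of two and log₂(kk') divides L
    (hpow : ∃ s : ℕ, k * k' = 2 ^ s) (hdvd : Nat.log 2 (k * k') ∣ L)
    -- the field 𝔽_q with q = 2^{k'}, as an 𝔽₂-algebra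
    (Fq : Type) [Field Fq] [Fintype Fq] [DecidableEq Fq] [Algebra (ZMod 2) Fq]
    (hq : Fintype.card Fq = 2 ^ k')
    -- the outer code: a k-dimensional 𝔽_q-linear subspace of 𝔽_q^n
    (Cout : Submodule Fq (Fin n → Fq)) (hCout : Module.finrank Fq ↥Cout = k)
    -- the inner encoding: an injective 𝔽₂-linear map 𝔽_q → 𝔽₂^{n'} (image = C_in)
    (encIn : Fq →ₗ[ZMod 2] (Fin n' → ZMod 2)) (hencIn : Function.Injective encIn)
    -- A is a full-rank generator matrix of the concatenated code C_out ∘ C_in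
    (A : Fin (k * k') → Fin n → Fin n' → ZMod 2)
    (hA : LinearIndependent (ZMod 2) A)
    (hAgen : (Submodule.span (ZMod 2) (Set.range A) : Set (Fin n → Fin n' → ZMod 2)) =
      (fun (σ : Fin n → Fq) (m : Fin n) => encIn (σ m)) '' (Cout : Set (Fin n → Fq))) :
    ∀ i : ℕ, i + 1 ≤ 2 ^ (k * k') - 1 →
      ∀ j j' : ℕ,
        RG.r B L (k * k') A i ≤ j → j ≤ RG.r B L (k * k') A (i + 1) →
        RG.r B L (k * k') A i ≤ j' → j' ≤ RG.r B L (k * k') A (i + 1) →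
        hammingDist (RG.gray B L (k * k') A j) (RG.gray B L (k * k') A j') =
          Nat.dist j j' :=
  stmt17_general k' k n n' B L A
end
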